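/- arXiv:2206.11674 — 7 statements merged into one kernel-verified Lean document; each statement's English description precedes it below -/
import Mathlib

section
/- Let t ≥ 1 and let d_1,…,d_t be real numbers; set d_{t+1} := 0 and δ_i := d_i − d_{i+1} for 1 ≤ i ≤ t. Let V be the t×t L-banded matrix with V_{i,j} = d_{max(i,j)}. Assume δ_i ≠ 0 for all 1 ≤ i ≤ t. Define the t×t matrix W by: W_{i,i} = δ_{i−1}^{−1} + δ_i^{−1} for 1 ≤ i ≤ t (with the convention δ_0^{−1} := 0, so W_{1,1} = δ_1^{−1}); W_{i,j} = −δ_{min(i,j)}^{−1} if |i−j| = 1; and W_{i,j} = 0 if |i−j| ≥ 2. Then W·V = I and V·W = I, i.e., V is invertible with tridiagonal inverse W. -/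
open Matrix

private lemma sum_two_support {n : ℕ} (f : ℕ → ℝ) (x y : ℕ) (hxy : x ≠ y)
    (hx : x < n) (hy : y < n) (h0 : ∀ k, k < n → k ≠ x → k ≠ y → f k = 0) :
    ∑ k ∈ Finset.range n, f k = f x + f y := by
  rw [← Finset.sum_subset (show ({x, y} : Finset ℕ) ⊆ Finset.range n by
        intro k hk; simp only [Finset.mem_insert, Finset.mem_singleton] at hk
        rcases hk with h | h <;> simp [h, Finset.mem_range, hx, hy])
      (fun k hk hk' => h0 k (Finset.mem_range.mp hk)
        (fun h => hk' (by simp [h])) (fun h => hk' (by simp [h])))]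
  rw [Finset.sum_insert (by simp [hxy]), Finset.sum_singleton]

private lemma sum_three_support {n : ℕ} (f : ℕ → ℝ) (x y z : ℕ) (hxy : x ≠ y)
    (hxz : x ≠ z) (hyz : y ≠ z) (hx : x < n) (hy : y < n) (hz : z < n)
    (h0 : ∀ k, k < n → k ≠ x → k ≠ y → k ≠ z → f k = 0) :
    ∑ k ∈ Finset.range n, f k = f x + f y + f z := by
  rw [← Finset.sum_subset (show ({x, y, z} : Finset ℕ) ⊆ Finset.range n by
        intro k hk; simp only [Finset.mem_insert, Finset.mem_singleton] at hk
        rcases hk with h | h | h <;> simp [h, Finset.mem_range, hx, hy, hz])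
      (fun k hk hk' => h0 k (Finset.mem_range.mp hk)
        (fun h => hk' (by simp [h])) (fun h => hk' (by simp [h]))
        (fun h => hk' (by simp [h])))]
  rw [Finset.sum_insert (by simp [hxy, hxz]),
    Finset.sum_insert (by simp [hyz]), Finset.sum_singleton, add_assoc]

/-- The inverse of an L-banded matrix `V` (with `V_{i,j} = d_{max(i,j)}`,
entries indexed by `1,…,t`, with the convention `d_{t+1} = 0` and
`δ_i = d_i − d_{i+1} ≠ 0`) is the tridiagonal matrix `W` with
`W_{i,i} = δ_{i−1}⁻¹ + δ_i⁻¹` (where `δ_0⁻¹ := 0`),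
`W_{i,j} = −δ_{min(i,j)}⁻¹` for `|i−j| = 1`, and `W_{i,j} = 0` otherwise.
Here a matrix index `i : Fin t` corresponds to the paper index `i.val + 1`. -/
theorem lband_inverse_tridiagonal (t : ℕ) (ht : 1 ≤ t)
    (d : ℕ → ℝ) (hd : d (t + 1) = 0)
    (δ : ℕ → ℝ) (hδdef : ∀ i, δ i = d i - d (i + 1))
    (hδ : ∀ i, 1 ≤ i → i ≤ t → δ i ≠ 0)
    (V W : Matrix (Fin t) (Fin t) ℝ)
    (hV : ∀ i j : Fin t, V i j = d (max i.val j.val + 1))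
    (hW : ∀ i j : Fin t, W i j =
      if i = j then (if i.val = 0 then 0 else (δ i.val)⁻¹) + (δ (i.val + 1))⁻¹
      else if max i.val j.val = min i.val j.val + 1 then -(δ (min i.val j.val + 1))⁻¹
      else 0) :
    W * V = 1 ∧ V * W = 1 := by
  have hVs : Vᵀ = V := by
    ext i j
    rw [Matrix.transpose_apply, hV, hV, max_comm]
  have hWs : Wᵀ = W := by
    ext i j
    rw [Matrix.transpose_apply, hW, hW]
    by_cases h : i = j
    · subst h; simp
    · rw [if_neg (Ne.symm h), if_neg h, max_comm, min_comm]
  have key : W * V = 1 := by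
    ext i j
    rw [Matrix.mul_apply, Matrix.one_apply]
    have hat : (i : ℕ) < t := i.isLt
    have hbt : (j : ℕ) < t := j.isLt
    set a := (i : ℕ) with ha
    set b := (j : ℕ) with hb
    set g : ℕ → ℝ := fun k =>
      (if k = a then (if a = 0 then 0 else (δ a)⁻¹) + (δ (a + 1))⁻¹
       else if max k a = min k a + 1 then -(δ (min k a + 1))⁻¹ else 0) *
        d (max k b + 1) with hg
    have step1 : ∑ k : Fin t, W i k * V k j = ∑ k ∈ Finset.range t, g k := by
      rw [← Fin.sum_univ_eq_sum_range]
      refine Finset.sum_congr rfl fun k _ => ?_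
      rw [hW, hV]
      simp only [hg]
      by_cases h : i = k
      · rw [if_pos h, if_pos (show (k : ℕ) = a from (congrArg Fin.val h).symm)]
      · rw [if_neg h, if_neg (show ¬(k : ℕ) = a from fun hc => h (Fin.ext hc.symm)),
          max_comm (k : ℕ) a, min_comm (k : ℕ) a]
    have hgt : g t = 0 := by
      rw [hg]
      simp only
      rw [if_neg (by omega)]
      by_cases h : max t a = min t a + 1
      · rw [if_pos h, max_eq_left (le_of_lt hbt), hd, mul_zero]
      · rw [if_neg h, zero_mul]
    have step2 : ∑ k ∈ Finset.range t, g k = ∑ k ∈ Finset.range (t + 1), g k := by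
      rw [Finset.sum_range_succ, hgt, add_zero]
    rw [step1, step2]
    have hiffe : (i = j) ↔ (a = b) := Fin.ext_iff
    by_cases ha0 : a = 0
    · -- first row
      have hsum : ∑ k ∈ Finset.range (t + 1), g k = g 0 + g 1 :=
        sum_two_support g 0 1 (by omega) (by omega) (by omega)
          (fun k hk hk0 hk1 => by
            rw [hg]; simp only
            rw [if_neg (by omega), if_neg (by omega), zero_mul])
      rw [hsum]
      have hg0 : g 0 = (δ 1)⁻¹ * d (b + 1) := by
        rw [hg]; simp only
        rw [if_pos ha0.symm, if_pos ha0, zero_add, ha0]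
        norm_num
      have hg1 : g 1 = -(δ 1)⁻¹ * d (max 1 b + 1) := by
        rw [hg]; simp only
        rw [if_neg (by omega), if_pos (by omega)]
        have : min 1 a + 1 = 1 := by omega
        rw [this]
      rw [hg0, hg1]
      by_cases hab : a = b
      · rw [if_pos (hiffe.mpr hab)]
        have hb0 : b = 0 := by omega
        have e1 : δ 1 = d 1 - d 2 := hδdef 1
        have hv : (δ 1)⁻¹ * δ 1 = 1 := inv_mul_cancel₀ (hδ 1 le_rfl ht)
        rw [hb0]
        norm_num
        linear_combination hv - (δ 1)⁻¹ * e1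
      · rw [if_neg (fun h => hab (hiffe.mp h))]
        have hmb : max 1 b = b := by omega
        rw [hmb]; ring
    · -- a ≥ 1
      have ha1 : 1 ≤ a := by omega
      have hsum : ∑ k ∈ Finset.range (t + 1), g k = g (a - 1) + g a + g (a + 1) :=
        sum_three_support g (a - 1) a (a + 1) (by omega) (by omega) (by omega)
          (by omega) (by omega) (by omega)
          (fun k hk hk0 hk1 hk2 => by
            rw [hg]; simp only
            rw [if_neg (by omega), if_neg (by omega), zero_mul])
      rw [hsum]
      have hgm : g (a - 1) = -(δ a)⁻¹ * d (max (a - 1) b + 1) := by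
        rw [hg]; simp only
        rw [if_neg (by omega), if_pos (by omega)]
        have : min (a - 1) a + 1 = a := by omega
        rw [this]
      have hga : g a = ((δ a)⁻¹ + (δ (a + 1))⁻¹) * d (max a b + 1) := by
        simp [hg, ha0]
      have hgp : g (a + 1) = -(δ (a + 1))⁻¹ * d (max (a + 1) b + 1) := by
        rw [hg]; simp only
        rw [if_neg (by omega), if_pos (by omega)]
        have : min (a + 1) a + 1 = a + 1 := by omega
        rw [this]
      rw [hgm, hga, hgp]
      have ea : δ a = d a - d (a + 1) := hδdef a
      have e1 : δ (a + 1) = d (a + 1) - d (a + 1 + 1) := hδdef (a + 1)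
      have hu : (δ a)⁻¹ * δ a = 1 := inv_mul_cancel₀ (hδ a ha1 (by omega))
      have hv : (δ (a + 1))⁻¹ * δ (a + 1) = 1 := inv_mul_cancel₀ (hδ (a + 1) (by omega) (by omega))
      by_cases hab : a = b
      · rw [if_pos (hiffe.mpr hab)]
        have h1 : max (a - 1) b = a := by omega
        have h2 : max a b = a := by omega
        have h3 : max (a + 1) b = a + 1 := by omega
        rw [h1, h2, h3]
        linear_combination hv - (δ (a + 1))⁻¹ * e1
      · rw [if_neg (fun h => hab (hiffe.mp h))]
        by_cases hba : b < a
        · have h1 : max (a - 1) b = a - 1 := by omega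
          have h2 : max a b = a := by omega
          have h3 : max (a + 1) b = a + 1 := by omega
          rw [h1, h2, h3]
          have hsp : a - 1 + 1 = a := by omega
          rw [hsp]
          linear_combination (δ a)⁻¹ * ea - hu - (δ (a + 1))⁻¹ * e1 + hv
        · have h1 : max (a - 1) b = b := by omega
          have h2 : max a b = b := by omega
          have h3 : max (a + 1) b = b := by omega
          rw [h1, h2, h3]
          ring
  refine ⟨key, ?_⟩
  have : V * W = (W * V)ᵀ := by rw [Matrix.transpose_mul, hVs, hWs]
  rw [this, key, Matrix.transpose_one]
end

section
/- Let t ≥ 1 and let V be an invertible t×t L-banded real matrix with diagonal d_1,…,d_t (so d_t ≠ 0). Then V^{−1}·1 = d_t^{−1}·e_t and 1ᵀ·V^{−1} = d_t^{−1}·e_tᵀ, where 1 is the all-ones vector and e_t the t-th standard basis vector; consequently 1ᵀ·V^{−1}·1 = d_t^{−1}. -/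
open Matrix

/-!
The last column of an L-banded matrix `V` is constant, equal to `d_t`, so `V e_t = d_t 1`.
Since `V` is invertible and `e_t ≠ 0`, this forces `d_t ≠ 0` and `V⁻¹ 1 = d_t⁻¹ e_t`. The claim
about `1ᵀ V⁻¹` is the same statement for `Vᵀ`, which is L-banded with the same diagonal.
-/

namespace Matrix

theorem transpose_of_lBanded {ι α : Type*} [LinearOrder ι] {d : ι → α} {V : Matrix ι ι α}
    (hV : ∀ i j, V i j = d (max i j)) : ∀ i j, Vᵀ i j = d (max i j) := fun i j => by
  rw [transpose_apply, hV, max_comm]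

theorem mulVec_single_top_of_lBanded {ι R : Type*} [Fintype ι] [DecidableEq ι] [LinearOrder ι]
    [OrderTop ι] [NonAssocSemiring R] {d : ι → R} {V : Matrix ι ι R}
    (hV : ∀ i j, V i j = d (max i j)) : V *ᵥ Pi.single ⊤ 1 = d ⊤ • 1 := by
  ext i
  simp [mulVec_single, hV]

variable {ι K : Type*} [Fintype ι] [DecidableEq ι] [Field K]

theorem ne_zero_and_inv_mulVec_eq_of_mulVec_eq_smul {A : Matrix ι ι K} (hA : IsUnit A) {x y : ι → K} {c : K}
    (hx : x ≠ 0) (h : A *ᵥ x = c • y) : c ≠ 0 ∧ A⁻¹ *ᵥ y = c⁻¹ • x := by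
  have hc : c ≠ 0 := by
    rintro rfl
    rw [zero_smul, ← mulVec_zero A] at h
    exact hx (mulVec_injective_iff_isUnit.mpr hA h)
  have hx_eq : x = c • (A⁻¹ *ᵥ y) := by
    rw [← mulVec_smul, ← h, mulVec_mulVec, nonsing_inv_mul _ ((isUnit_iff_isUnit_det A).mp hA),
      one_mulVec]
  exact ⟨hc, by rw [hx_eq, smul_smul, inv_mul_cancel₀ hc, one_smul]⟩

section LBanded

variable [LinearOrder ι] [OrderTop ι] {d : ι → K} {V : Matrix ι ι K}

theorem inv_mulVec_one_of_lBanded (hV : ∀ i j, V i j = d (max i j)) (hinv : IsUnit V) :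
    d ⊤ ≠ 0 ∧ V⁻¹ *ᵥ 1 = (d ⊤)⁻¹ • Pi.single ⊤ 1 :=
  ne_zero_and_inv_mulVec_eq_of_mulVec_eq_smul hinv (Pi.single_ne_zero_iff.mpr one_ne_zero)
    (mulVec_single_top_of_lBanded hV)

theorem one_vecMul_inv_of_lBanded (hV : ∀ i j, V i j = d (max i j)) (hinv : IsUnit V) :
    1 ᵥ* V⁻¹ = (d ⊤)⁻¹ • Pi.single ⊤ 1 := by
  rw [← mulVec_transpose, transpose_nonsing_inv]
  exact (inv_mulVec_one_of_lBanded (transpose_of_lBanded hV) ((isUnit_transpose V).mpr hinv)).2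

end LBanded

end Matrix

/-- For an invertible L-banded matrix `V` (with `V_{i,j} = d_{max(i,j)}`),
one has `d_t ≠ 0`, `V⁻¹·1 = d_t⁻¹·e_t`, `1ᵀ·V⁻¹ = d_t⁻¹·e_tᵀ`, and
`1ᵀ·V⁻¹·1 = d_t⁻¹`. -/
theorem lband_inv_ones (n : ℕ) (d : Fin (n + 1) → ℝ)
    (V : Matrix (Fin (n + 1)) (Fin (n + 1)) ℝ)
    (hV : ∀ i j, V i j = d (max i j))
    (hinv : IsUnit V) :
    d (Fin.last n) ≠ 0 ∧
    V⁻¹ *ᵥ (1 : Fin (n + 1) → ℝ) =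
      (d (Fin.last n))⁻¹ • (Pi.single (Fin.last n) 1 : Fin (n + 1) → ℝ) ∧
    (1 : Fin (n + 1) → ℝ) ᵥ* V⁻¹ =
      (d (Fin.last n))⁻¹ • (Pi.single (Fin.last n) 1 : Fin (n + 1) → ℝ) ∧
    (1 : Fin (n + 1) → ℝ) ⬝ᵥ (V⁻¹ *ᵥ (1 : Fin (n + 1) → ℝ)) = (d (Fin.last n))⁻¹ := by
  obtain ⟨hd, hcol⟩ := inv_mulVec_one_of_lBanded hV hinv
  have hrow := one_vecMul_inv_of_lBanded hV hinv
  rw [Fin.top_eq_last] at hd hcol hrow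
  refine ⟨hd, hcol, hrow, ?_⟩
  rw [hcol, dotProduct_smul, dotProduct_single, Pi.one_apply, one_mul, smul_eq_mul, mul_one]
end

section
/- Let t ≥ 1 and let V be the t×t L-banded real matrix with diagonal d_1,…,d_t. Then det(V) = d_t · ∏_{i=1}^{t−1} (d_i − d_{i+1}). -/
open Matrix

private theorem lband_det_aux : ∀ (n : ℕ) (d : Fin (n + 1) → ℝ)
    (V : Matrix (Fin (n + 1)) (Fin (n + 1)) ℝ)
    (_ : ∀ i j, V i j = d (max i j)),
    V.det = d (Fin.last n) * ∏ i : Fin n, (d i.castSucc - d i.succ) := by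
  intro n
  induction n with
  | zero =>
    intro d V hV
    simp [Matrix.det_fin_one, hV]
  | succ n ih =>
    intro d V hV
    have h01 : (0 : Fin (n + 2)) ≠ 1 := Fin.zero_ne_one
    have hdet := Matrix.det_updateRow_add_smul_self V h01 (-1 : ℝ)
    set B := V.updateRow 0 (V 0 + (-1 : ℝ) • V 1) with hB
    have hB0 : ∀ j : Fin (n + 2), j ≠ 0 → B 0 j = 0 := by
      intro j hj
      have h1j : (1 : Fin (n + 2)) ≤ j := by
        rw [Fin.le_def]
        have : (j : ℕ) ≠ 0 := fun h => hj (Fin.ext h)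
        simpa using Nat.one_le_iff_ne_zero.mpr this
      simp only [hB, Matrix.updateRow_self, Pi.add_apply, Pi.smul_apply,
        hV, smul_eq_mul]
      rw [max_eq_right (Fin.zero_le j), max_eq_right h1j]
      ring
    have hB00 : B 0 0 = d 0 - d 1 := by
      simp only [hB, Matrix.updateRow_self, Pi.add_apply, Pi.smul_apply,
        hV, smul_eq_mul]
      simp
      ring
    have hmax : ∀ i j : Fin (n + 1), max i.succ j.succ = (max i j).succ := by
      intro i j
      rcases le_total i j with h | h
      · rw [max_eq_right h, max_eq_right (Fin.succ_le_succ_iff.mpr h)]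
      · rw [max_eq_left h, max_eq_left (Fin.succ_le_succ_iff.mpr h)]
    have hminor : (B.submatrix Fin.succ Fin.succ).det
        = d (Fin.last n).succ * ∏ i : Fin n, (d i.succ.castSucc - d i.succ.succ) := by
      have := ih (fun i => d i.succ) (B.submatrix Fin.succ Fin.succ) (by
        intro i j
        simp only [Matrix.submatrix_apply, hB,
          Matrix.updateRow_ne (Fin.succ_ne_zero i), hV, hmax])
      simpa using this
    have hexp : B.det = (d 0 - d 1) * (B.submatrix Fin.succ Fin.succ).det := by
      rw [Matrix.det_succ_row_zero]
      rw [Finset.sum_eq_single 0]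
      · simp [hB00, Fin.succAbove_zero]
      · intro j _ hj
        rw [hB0 j hj]; ring
      · intro h; exact absurd (Finset.mem_univ 0) h
    rw [← hdet, hexp, hminor, Fin.prod_univ_succ]
    simp only [Fin.succ_last, Fin.castSucc_zero, Fin.succ_castSucc, Fin.succ_zero_eq_one]
    ring

/-- The determinant of the L-banded matrix with diagonal `d_1,…,d_t`
is `d_t · ∏_{i=1}^{t−1} (d_i − d_{i+1})`. -/
theorem lband_det (n : ℕ) (d : Fin (n + 1) → ℝ)
    (V : Matrix (Fin (n + 1)) (Fin (n + 1)) ℝ)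
    (hV : ∀ i j, V i j = d (max i j)) :
    V.det = d (Fin.last n) * ∏ i : Fin n, (d i.castSucc - d i.succ) := by
  exact lband_det_aux n d V hV
end

section
/- Let t ≥ 1 and let V be the t×t L-banded real matrix with diagonal d_1,…,d_t. Then V is invertible if and only if d_t ≠ 0 and d_i ≠ d_{i+1} for every 1 ≤ i ≤ t−1. -/
open Matrix

/-- The L-banded matrix with diagonal `d_1,…,d_t` is invertible if and only if
`d_t ≠ 0` and `d_i ≠ d_{i+1}` for all `1 ≤ i ≤ t−1`. -/
theorem lband_invertible_iff (n : ℕ) (d : Fin (n + 1) → ℝ)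
    (V : Matrix (Fin (n + 1)) (Fin (n + 1)) ℝ)
    (hV : ∀ i j, V i j = d (max i j)) :
    IsUnit V ↔ (d (Fin.last n) ≠ 0 ∧ ∀ i : Fin n, d i.castSucc ≠ d i.succ) := by
  classical
  -- Row-operation matrix: subtract row (i+1) from row i.
  set E : Matrix (Fin (n + 1)) (Fin (n + 1)) ℝ := fun i k =>
    (if k = i then (1 : ℝ) else 0) + (if (k : ℕ) = (i : ℕ) + 1 then (-1 : ℝ) else 0) with hE
  have hmul : ∀ i j : Fin (n + 1), (E * V) i j =
      V i j - (if h : (i : ℕ) < n then V ⟨(i : ℕ) + 1, by omega⟩ j else 0) := by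
    intro i j
    rw [Matrix.mul_apply]
    simp only [hE, add_mul, ite_mul, one_mul, zero_mul, neg_one_mul]
    rw [Finset.sum_add_distrib, Finset.sum_ite_eq' Finset.univ i (fun k => V k j)]
    simp only [Finset.mem_univ, if_true]
    by_cases h : (i : ℕ) < n
    · rw [dif_pos h]
      have : ∀ k : Fin (n + 1), ((k : ℕ) = (i : ℕ) + 1) ↔ k = ⟨(i : ℕ) + 1, by omega⟩ := by
        intro k; constructor
        · intro hk; exact Fin.ext hk
        · intro hk; rw [hk]
      rw [Finset.sum_congr rfl (fun k _ => by rw [if_congr (this k) rfl rfl]),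
        Finset.sum_ite_eq' Finset.univ _ (fun k => -V k j)]
      simp [sub_eq_add_neg]
    · rw [dif_neg h]
      have : ∀ k : Fin (n + 1), ¬ ((k : ℕ) = (i : ℕ) + 1) := by
        intro k hk
        have := k.isLt
        omega
      simp [this]
  have hEup : E.det = 1 := by
    have : ∀ i j : Fin (n + 1), j < i → E i j = 0 := by
      intro i j hij
      simp only [hE]
      rw [if_neg (by exact Fin.ne_of_lt hij), if_neg (by
        intro hc
        have : (j : ℕ) < (i : ℕ) := hij
        omega), add_zero]
    rw [Matrix.det_of_upperTriangular (fun i j h => this i j h)]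
    apply Finset.prod_eq_one
    intro i _
    simp [hE]
  have htri : ∀ i j : Fin (n + 1), i < j → (E * V) i j = 0 := by
    intro i j hij
    rw [hmul]
    have hin : (i : ℕ) < n := by
      have := j.isLt
      have : (i : ℕ) < (j : ℕ) := hij
      omega
    rw [dif_pos hin, hV, hV]
    have h1 : max i j = j := max_eq_right (le_of_lt hij)
    have h2 : max (⟨(i : ℕ) + 1, by omega⟩ : Fin (n + 1)) j = j := by
      apply max_eq_right
      exact Fin.le_def.mpr (by
        have : (i : ℕ) < (j : ℕ) := hij
        simpa using this)
    rw [h1, h2, sub_self]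
  have hdiag : ∀ i : Fin (n + 1), (E * V) i i =
      (if h : (i : ℕ) < n then d i - d ⟨(i : ℕ) + 1, by omega⟩ else d i) := by
    intro i
    rw [hmul, hV]
    by_cases h : (i : ℕ) < n
    · rw [dif_pos h, dif_pos h, hV, max_self]
      congr 1
      apply congrArg
      apply max_eq_left
      exact Fin.le_def.mpr (by simp)
    · rw [dif_neg h, dif_neg h, max_self, sub_zero]
  have hdet : V.det = d (Fin.last n) * ∏ i : Fin n, (d i.castSucc - d i.succ) := by
    have h1 : (E * V).det = E.det * V.det := Matrix.det_mul E V
    rw [hEup, one_mul] at h1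
    rw [← h1, Matrix.det_of_lowerTriangular (E * V) (fun i j h => htri i j h)]
    rw [Finset.prod_congr rfl (fun i _ => hdiag i)]
    rw [Fin.prod_univ_castSucc]
    have hlast : ¬ ((Fin.last n : Fin (n + 1)) : ℕ) < n := by simp
    rw [dif_neg hlast, mul_comm]
    congr 1
    apply Finset.prod_congr rfl
    intro i _
    have hi : ((i.castSucc : Fin (n + 1)) : ℕ) < n := by simp
    rw [dif_pos hi]
    have : (⟨((i.castSucc : Fin (n+1)) : ℕ) + 1, by omega⟩ : Fin (n+1)) = i.succ := Fin.ext (by simp)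
    rw [this]
  rw [Matrix.isUnit_iff_isUnit_det, isUnit_iff_ne_zero, hdet, mul_ne_zero_iff,
    Finset.prod_ne_zero_iff]
  constructor
  · rintro ⟨h1, h2⟩
    exact ⟨h1, fun i => sub_ne_zero.mp (h2 i (Finset.mem_univ i))⟩
  · rintro ⟨h1, h2⟩
    exact ⟨h1, fun i _ => sub_ne_zero.mpr (h2 i)⟩
end

section
/- Let t ≥ 1 and let V be a t×t L-banded real matrix with diagonal d_1,…,d_t that is positive semidefinite. Then the diagonal sequence is nonnegative and monotonically decreasing: 0 ≤ d_i ≤ d_j whenever 1 ≤ j ≤ i ≤ t. -/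
/-!
Evaluating the quadratic form of `V` at `e_i` gives `d_i ≥ 0`, and at `e_i - e_j` it gives
`V_ii + V_jj - V_ij - V_ji = d_j - d_i ≥ 0` when `j ≤ i`, since then `V_ij = V_ji = d_i`.
-/

open Matrix

lemma Matrix.PosSemidef.apply_add_apply_le {n R : Type*} [Ring R] [PartialOrder R] [StarRing R]
    [AddLeftMono R] {A : Matrix n n R} (hA : A.PosSemidef) (i j : n) :
    A i j + A j i ≤ A i i + A j j := by
  have h := (hA.submatrix ![i, j]).dotProduct_mulVec_nonneg ![1, -1]
  simp only [dotProduct, Pi.star_apply, mulVec, submatrix_apply, Fin.sum_univ_two, Fin.isValue,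
    cons_val_zero, cons_val_one, cons_val_fin_one, mul_one, mul_neg, star_one, one_mul, star_neg,
    neg_mul, neg_add_rev, neg_neg] at h
  rw [← sub_nonneg]
  convert h using 1
  abel

/-- The diagonal of a positive semidefinite L-banded matrix is nonnegative and
monotonically decreasing: `0 ≤ d_i ≤ d_j` whenever `j ≤ i`. -/
theorem lband_psd_diag_antitone (n : ℕ) (d : Fin (n + 1) → ℝ)
    (V : Matrix (Fin (n + 1)) (Fin (n + 1)) ℝ)
    (hV : ∀ i j, V i j = d (max i j))
    (hpsd : V.PosSemidef) :
    ∀ i j : Fin (n + 1), j ≤ i → 0 ≤ d i ∧ d i ≤ d j := by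
  intro i j hji
  have hVii : V i i = d i := by rw [hV, max_self]
  have hVjj : V j j = d j := by rw [hV, max_self]
  have hVij : V i j = d i := by rw [hV, max_eq_left hji]
  have hVji : V j i = d i := by rw [hV, max_eq_right hji]
  refine ⟨hVii ▸ hpsd.diag_nonneg, ?_⟩
  have := hpsd.apply_add_apply_le i j
  linarith
end

section
/- Let d : ℕ → ℝ be a sequence such that for every t ≥ 1 the t×t L-banded matrix with diagonal d_1,…,d_t is positive semidefinite. Then the sequence (d_t)_{t≥1} is monotonically decreasing, bounded below by 0, and converges to some limit d_* ≥ 0. -/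
open Matrix Filter Topology

/- The argument only tests the quadratic form `xᵀ V x ≥ 0` of the L-banded matrix `V` on two kinds
of vectors: a unit vector `e_t` gives `d_t ≥ 0`, and `e_s - e_t` gives `d_s - d_t ≥ 0` because
three of the four entries involved equal `d_t`. A decreasing sequence bounded below by `0`
converges to its infimum. -/

lemma Matrix.PosSemidef.diag_sub_offDiag_nonneg {n : Type*} [Fintype n] [DecidableEq n]
    {M : Matrix n n ℝ} (hM : M.PosSemidef) (a b : n) :
    0 ≤ M a a - M a b - M b a + M b b := by
  have := hM.dotProduct_mulVec_nonneg (Pi.single a 1 - Pi.single b 1)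
  simp only [star_trivial, sub_dotProduct, mulVec_sub, dotProduct_sub, mulVec_single_one,
    single_one_dotProduct, col_apply] at this
  linarith

-- Index `i : Fin t` stands for the paper's index `i + 1`, so `lBanded d t` has diagonal `d 1, …, d t`.
def lBanded (d : ℕ → ℝ) (t : ℕ) : Matrix (Fin t) (Fin t) ℝ :=
  of fun i j => d (max i.val j.val + 1)

lemma lBanded_nonneg_of_posSemidef {d : ℕ → ℝ} {t : ℕ} (hV : (lBanded d t).PosSemidef)
    (ht : 1 ≤ t) : 0 ≤ d t := by
  simpa [lBanded, Nat.sub_add_cancel ht] using hV.diag_nonneg (i := ⟨t - 1, by omega⟩)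

lemma lBanded_antitone_of_posSemidef {d : ℕ → ℝ} {s t : ℕ} (hV : (lBanded d t).PosSemidef)
    (hs : 1 ≤ s) (hst : s ≤ t) : d t ≤ d s := by
  have key := hV.diag_sub_offDiag_nonneg ⟨s - 1, by omega⟩ ⟨t - 1, by omega⟩
  simp only [lBanded, of_apply, max_self, Nat.max_eq_right (Nat.sub_le_sub_right hst 1),
    Nat.max_eq_left (Nat.sub_le_sub_right hst 1), Nat.sub_add_cancel hs,
    Nat.sub_add_cancel (hs.trans hst)] at key
  linarith

lemma exists_nonneg_tendsto_of_antitoneOn_Ici {d : ℕ → ℝ} {k : ℕ} (hd : AntitoneOn d (Set.Ici k))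
    (h0 : ∀ n, k ≤ n → 0 ≤ d n) : ∃ l, 0 ≤ l ∧ Tendsto d atTop (𝓝 l) := by
  have hanti : Antitone fun n => d (n + k) := fun m n hmn =>
    hd (Nat.le_add_left k m) (Nat.le_add_left k n) (by omega)
  have hbdd : BddBelow (Set.range fun n => d (n + k)) :=
    ⟨0, by rintro _ ⟨n, rfl⟩; exact h0 _ (Nat.le_add_left k n)⟩
  refine ⟨⨅ n, d (n + k), le_ciInf fun n => h0 _ (Nat.le_add_left k n), ?_⟩
  exact (tendsto_add_atTop_iff_nat k).mp (tendsto_atTop_ciInf hanti hbdd)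

/-- If for every `t ≥ 1` the `t × t` L-banded matrix with diagonal `d_1,…,d_t`
(`V_{i,j} = d_{max(i,j)}`, a matrix index `i : Fin t` corresponding to the
paper index `i.val + 1`) is positive semidefinite, then the sequence
`(d_t)_{t ≥ 1}` is monotonically decreasing, bounded below by `0`, and
converges to some limit `d_* ≥ 0`. -/
theorem lband_psd_seq_converges (d : ℕ → ℝ)
    (h : ∀ t : ℕ, 1 ≤ t →
      Matrix.PosSemidef (Matrix.of fun i j : Fin t => d (max i.val j.val + 1))) :
    (∀ s t : ℕ, 1 ≤ s → s ≤ t → d t ≤ d s) ∧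
    (∀ t : ℕ, 1 ≤ t → 0 ≤ d t) ∧
    ∃ dstar : ℝ, 0 ≤ dstar ∧ Filter.Tendsto d Filter.atTop (nhds dstar) := by
  have hmono : ∀ s t : ℕ, 1 ≤ s → s ≤ t → d t ≤ d s := fun s t hs hst =>
    lBanded_antitone_of_posSemidef (h t (hs.trans hst)) hs hst
  have hnn : ∀ t : ℕ, 1 ≤ t → 0 ≤ d t := fun t ht => lBanded_nonneg_of_posSemidef (h t ht) ht
  exact ⟨hmono, hnn, exists_nonneg_tendsto_of_antitoneOn_Ici
    (fun s hs t _ hst => hmono s t hs hst) hnn⟩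
end

section
/- Let Ṽ be a t×t real positive definite matrix (t ≥ 1), and for 1 ≤ i ≤ t let Ṽ_i denote its leading principal i×i submatrix (which is positive definite, hence invertible). For each i define ζ_i := Ṽ_i^{−1}1_i / (1_iᵀṼ_i^{−1}1_i) ∈ ℝ^i and let Z be the t×t matrix whose i-th column is ζ_i padded with zeros in positions i+1,…,t. Then the matrix V := ZᵀṼZ is L-banded with diagonal d_i = 1/(1_iᵀṼ_i^{−1}1_i), i.e., V_{i,j} = d_{max(i,j)} for all 1 ≤ i,j ≤ t. (Equivalently: step-by-step optimal damping of a sequence of observations produces a new sequence whose error covariance matrix is L-banded.) -/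
open Matrix

/-!
The columns of `Z` are upper triangular with entries summing to one, and `ζ_j` solves
`Ṽ_j ζ_j = d_j 1_j`, so `(ṼZ)_{k,j} = d_j` for every `k ≤ j`. Hence for `i ≤ j` the entry
`(ZᵀṼZ)_{i,j} = ∑_{k ≤ i} ζ_i(k) (ṼZ)_{k,j}` collapses to `d_j`, and symmetry of `ZᵀṼZ`
covers `i > j`.
-/

/-- The leading principal `(i+1) × (i+1)` submatrix of `A`
(for an index `i : Fin (n+1)`, i.e. the paper's `Ṽ_{i+1}`). -/
def leadingSub {n : ℕ} (A : Matrix (Fin (n + 1)) (Fin (n + 1)) ℝ) (i : Fin (n + 1)) :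
    Matrix (Fin (i.val + 1)) (Fin (i.val + 1)) ℝ :=
  fun k l => A (Fin.castLE i.isLt k) (Fin.castLE i.isLt l)

/-- The optimal damping vector `ζ_i := Ṽ_i⁻¹1_i / (1_iᵀṼ_i⁻¹1_i)` built from
the leading principal submatrix of `A` of size `i.val + 1`. -/
noncomputable def dampVec {n : ℕ} (A : Matrix (Fin (n + 1)) (Fin (n + 1)) ℝ)
    (i : Fin (n + 1)) : Fin (i.val + 1) → ℝ :=
  ((1 : Fin (i.val + 1) → ℝ) ⬝ᵥ ((leadingSub A i)⁻¹ *ᵥ (1 : Fin (i.val + 1) → ℝ)))⁻¹ •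
    ((leadingSub A i)⁻¹ *ᵥ (1 : Fin (i.val + 1) → ℝ))

/-- The matrix `Z` whose `i`-th column is `ζ_i` padded with zeros. -/
noncomputable def dampMat {n : ℕ} (A : Matrix (Fin (n + 1)) (Fin (n + 1)) ℝ) :
    Matrix (Fin (n + 1)) (Fin (n + 1)) ℝ :=
  fun k i => if h : k.val ≤ i.val then dampVec A i ⟨k.val, by omega⟩ else 0

/-- The optimally damped MSE `d_i := 1/(1_iᵀṼ_i⁻¹1_i)` of the leading
principal submatrix of `A` of size `i.val + 1`. -/
noncomputable def dampedMSE {n : ℕ} (A : Matrix (Fin (n + 1)) (Fin (n + 1)) ℝ)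
    (i : Fin (n + 1)) : ℝ :=
  ((1 : Fin (i.val + 1) → ℝ) ⬝ᵥ ((leadingSub A i)⁻¹ *ᵥ (1 : Fin (i.val + 1) → ℝ)))⁻¹

theorem Matrix.IsSymm.transpose_mul_mul_apply_eq_max {ι R : Type*} [Fintype ι] [LinearOrder ι]
    [CommSemiring R] {A Z : Matrix ι ι R} {d : ι → R} (hA : A.IsSymm)
    (hZ : ∀ i k, i < k → Z k i = 0) (hsum : ∀ i, ∑ k, Z k i = 1)
    (hAZ : ∀ k j, k ≤ j → (A * Z) k j = d j) (i j : ι) :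
    (Zᵀ * A * Z) i j = d (max i j) := by
  have upper : ∀ i j, i ≤ j → (Zᵀ * A * Z) i j = d j := by
    intro i j hij
    calc (Zᵀ * A * Z) i j = ∑ k, Z k i * (A * Z) k j := by rw [Matrix.mul_assoc, mul_apply]; rfl
      _ = ∑ k, Z k i * d j := by
        refine Finset.sum_congr rfl fun k _ => ?_
        rcases le_or_gt k i with hk | hk
        · rw [hAZ k j (hk.trans hij)]
        · rw [hZ i k hk, zero_mul, zero_mul]
      _ = d j := by rw [← Finset.sum_mul, hsum, one_mul]
  have symm : (Zᵀ * A * Z).IsSymm := by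
    simp only [IsSymm, transpose_mul, transpose_transpose, hA.eq, Matrix.mul_assoc]
  rcases le_total i j with hij | hji
  · rw [max_eq_right hij, upper i j hij]
  · rw [max_eq_left hji, ← symm.apply, upper j i hji]

theorem Fin.sum_eq_sum_castLE_of_eq_zero {M : Type*} [AddCommMonoid M] {n : ℕ} (i : Fin n)
    (g : Fin n → M) (hg : ∀ k, i < k → g k = 0) :
    ∑ k, g k = ∑ k : Fin (i + 1), g (Fin.castLE i.isLt k) := by
  refine (Fintype.sum_of_injective _ (Fin.castLE_injective _) _ _ (fun k hk => hg k ?_)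
    fun _ => rfl).symm
  rw [Fin.range_castLE, Set.mem_ofPred_eq, not_lt] at hk
  exact Fin.lt_def.2 hk

theorem Matrix.PosDef.one_dotProduct_inv_mulVec_one_pos {ι : Type*} [Fintype ι] [DecidableEq ι]
    [Nonempty ι] {M : Matrix ι ι ℝ} (hM : M.PosDef) : 0 < 1 ⬝ᵥ (M⁻¹ *ᵥ 1) := by
  simpa using hM.inv.dotProduct_mulVec_pos (x := (1 : ι → ℝ)) one_ne_zero

section Damping

variable {n : ℕ} {A : Matrix (Fin (n + 1)) (Fin (n + 1)) ℝ}

theorem leadingSub_posDef (hA : A.PosDef) (i : Fin (n + 1)) : (leadingSub A i).PosDef :=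
  hA.submatrix (Fin.castLE_injective _)

theorem sum_dampVec (hA : A.PosDef) (i : Fin (n + 1)) : ∑ k, dampVec A i k = 1 := by
  rw [← one_dotProduct, dampVec, dotProduct_smul, smul_eq_mul,
    inv_mul_cancel₀ (leadingSub_posDef hA i).one_dotProduct_inv_mulVec_one_pos.ne']

theorem leadingSub_mulVec_dampVec (hA : A.PosDef) (i : Fin (n + 1)) :
    leadingSub A i *ᵥ dampVec A i = fun _ => dampedMSE A i := by
  have hdet : IsUnit (leadingSub A i).det :=
    isUnit_iff_ne_zero.2 (leadingSub_posDef hA i).det_pos.ne'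
  funext k
  rw [dampVec, mulVec_smul, mulVec_mulVec, mul_nonsing_inv _ hdet, one_mulVec]
  simp [dampedMSE]

theorem dampMat_castLE (i : Fin (n + 1)) (k : Fin (i + 1)) :
    dampMat A (Fin.castLE i.isLt k) i = dampVec A i k :=
  dif_pos (Nat.lt_succ_iff.1 k.isLt)

theorem dampMat_of_lt {i k : Fin (n + 1)} (h : i < k) : dampMat A k i = 0 :=
  dif_neg (not_le.2 h)

theorem sum_dampMat_col (hA : A.PosDef) (i : Fin (n + 1)) : ∑ k, dampMat A k i = 1 := by
  rw [Fin.sum_eq_sum_castLE_of_eq_zero i _ fun k => dampMat_of_lt]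
  simp only [dampMat_castLE]
  exact sum_dampVec hA i

theorem mul_dampMat_apply_of_le (hA : A.PosDef) {k j : Fin (n + 1)} (hkj : k ≤ j) :
    (A * dampMat A) k j = dampedMSE A j := by
  rw [mul_apply, Fin.sum_eq_sum_castLE_of_eq_zero j _ fun l h => by rw [dampMat_of_lt h, mul_zero]]
  simp only [dampMat_castLE]
  exact congrFun (leadingSub_mulVec_dampVec hA j) ⟨k, Nat.lt_succ_of_le hkj⟩

end Damping

/-- Step-by-step optimal damping of a positive definite covariance matrix `Ṽ`
produces the L-banded error covariance matrix `V = ZᵀṼZ` with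
`V_{i,j} = d_{max(i,j)}`, where `d_i = 1/(1_iᵀṼ_i⁻¹1_i)`. -/
theorem stepwise_damping_lbanded (n : ℕ)
    (A : Matrix (Fin (n + 1)) (Fin (n + 1)) ℝ) (hA : A.PosDef) :
    ∀ i j : Fin (n + 1), ((dampMat A)ᵀ * A * dampMat A) i j = dampedMSE A (max i j) :=
  (isHermitian_iff_isSymm.1 hA.isHermitian).transpose_mul_mul_apply_eq_max
    (fun _ _ => dampMat_of_lt) (sum_dampMat_col hA) (fun _ _ => mul_dampMat_apply_of_le hA)
end
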